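/- arXiv:1405.6800 — 2 statements merged into one kernel-verified Lean document; each statement's English description precedes it below -/
import Mathlib

section
/- Let $(E_1, \ldots, E_{n+1})$ be an exchangeable sequence of real-valued random variables, and define the rank-based p-value $p = \frac{1}{n+1} \sum_{i=1}^{n+1} \mathbf{1}\{ E_i \ge E_{n+1} \}$. Then for every $\alpha \in [0,1]$, $\mathbb{P}( p \le \alpha ) \le \alpha$; that is, $p$ is a valid (super-uniform) p-value. -/
open MeasureTheory
open scoped ENNReal

namespace ConfAux
variable {n : ℕ}

noncomputable def rk (j : Fin (n+1)) (x : Fin (n+1) → ℝ) : ℕ :=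
  (Finset.univ.filter fun i => x j ≤ x i).card

lemma rk_comp (σ : Equiv.Perm (Fin (n+1))) (x : Fin (n+1) → ℝ) (j : Fin (n+1)) :
    rk j (x ∘ σ) = rk (σ j) x := by
  unfold rk
  simp_rw [Finset.card_filter]
  exact Fintype.sum_equiv σ _ _ (fun i => rfl)

lemma rk_count_le (x : Fin (n+1) → ℝ) (k : ℕ) :
    (Finset.univ.filter fun j => rk j x ≤ k).card ≤ k := by
  set A := Finset.univ.filter fun j => rk j x ≤ k with hA
  rcases A.eq_empty_or_nonempty with h | h
  · simp [h]
  · obtain ⟨j0, hj0A, hj0min⟩ := A.exists_min_image x h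
    have hsub : A ⊆ Finset.univ.filter fun i => x j0 ≤ x i := by
      intro j hj
      simp only [Finset.mem_filter, Finset.mem_univ, true_and]
      exact hj0min j hj
    calc A.card ≤ rk j0 x := Finset.card_le_card hsub
      _ ≤ k := (Finset.mem_filter.mp hj0A).2

lemma rk_measurable (j : Fin (n+1)) : Measurable (rk j) := by
  unfold rk
  simp_rw [Finset.card_filter]
  exact Finset.measurable_sum _ fun i _ =>
    Measurable.ite (measurableSet_le (measurable_pi_apply j) (measurable_pi_apply i))
      measurable_const measurable_const

end ConfAux

/-- Let `(E₁, …, E_{n+1})` be an exchangeable sequence of real random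
variables and define the rank-based p-value
`p = (1/(n+1)) · #{i : Eᵢ ≥ E_{n+1}}`. Then for every `α ∈ [0,1]`,
`P(p ≤ α) ≤ α`: `p` is a valid (super-uniform) p-value. -/
theorem exchangeable_rank_pvalue_superuniform
    {n : ℕ} {Ω : Type*} [MeasurableSpace Ω] (P : Measure Ω) [IsProbabilityMeasure P]
    (E : Ω → Fin (n + 1) → ℝ) (hEmeas : Measurable E)
    -- exchangeability of E₁, …, E_{n+1}
    (hexch : ∀ σ : Equiv.Perm (Fin (n + 1)),
      Measure.map (fun ω => E ω ∘ σ) P = Measure.map E P)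
    -- the rank-based p-value
    (pval : Ω → ℝ)
    (hpval : ∀ ω, pval ω =
      (1 / ((n : ℝ) + 1)) *
        (Finset.univ.filter fun i : Fin (n + 1) => E ω (Fin.last n) ≤ E ω i).card) :
    ∀ α : ℝ, 0 ≤ α → α ≤ 1 → P {ω | pval ω ≤ α} ≤ ENNReal.ofReal α := by
  intro α hα0 hα1
  set k := ⌊α * ((n : ℝ) + 1)⌋₊ with hk
  have hnpos : (0:ℝ) < (n : ℝ) + 1 := by positivity
  -- rewrite the event
  have hset : {ω | pval ω ≤ α} = {ω | ConfAux.rk (Fin.last n) (E ω) ≤ k} := by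
    ext ω
    simp only [Set.mem_setOf_eq, hpval ω]
    rw [ConfAux.rk]
    constructor
    · intro h
      apply Nat.le_floor
      rw [one_div, inv_mul_le_iff₀ hnpos] at h
      linarith [h]
    · intro h
      have h' : ((Finset.univ.filter fun i : Fin (n + 1) => E ω (Fin.last n) ≤ E ω i).card : ℝ)
          ≤ α * ((n : ℝ) + 1) := by
        calc _ ≤ (k : ℝ) := by exact_mod_cast h
          _ ≤ α * ((n : ℝ) + 1) := Nat.floor_le (by positivity)
      rw [one_div, inv_mul_le_iff₀ hnpos]
      linarith
  rw [hset]
  -- measurable sets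
  set A : Fin (n+1) → Set Ω := fun j => {ω | ConfAux.rk j (E ω) ≤ k} with hAdef
  have hSmeas : ∀ j : Fin (n+1), MeasurableSet {x : Fin (n+1) → ℝ | ConfAux.rk j x ≤ k} :=
    fun j => (ConfAux.rk_measurable j) (show MeasurableSet (Set.Iic k) by trivial)
  have hAmeas : ∀ j, MeasurableSet (A j) := fun j =>
    hEmeas (hSmeas j)
  -- equal probabilities
  have hEσ : ∀ σ : Equiv.Perm (Fin (n+1)), Measurable (fun ω => E ω ∘ σ) := by
    intro σ
    exact (measurable_pi_lambda _ fun i => measurable_pi_apply (σ i)).comp hEmeas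
  have heq : ∀ j : Fin (n+1), P (A j) = P (A (Fin.last n)) := by
    intro j
    have := congrArg (fun μ : Measure (Fin (n+1) → ℝ) =>
      μ {x | ConfAux.rk (Fin.last n) x ≤ k}) (hexch (Equiv.swap j (Fin.last n)))
    rw [Measure.map_apply (hEσ _) (hSmeas _), Measure.map_apply hEmeas (hSmeas _)] at this
    have hpre : (fun ω => E ω ∘ (Equiv.swap j (Fin.last n))) ⁻¹'
        {x | ConfAux.rk (Fin.last n) x ≤ k} = A j := by
      ext ω
      simp only [Set.mem_preimage, Set.mem_setOf_eq, hAdef,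
        ConfAux.rk_comp, Equiv.swap_apply_right]
    rw [hpre] at this
    exact this
  -- counting bound
  have hsum : ∑ j : Fin (n+1), P (A j) ≤ (k : ℝ≥0∞) := by
    have h1 : ∑ j : Fin (n+1), P (A j)
        = ∫⁻ ω, ∑ j : Fin (n+1), (A j).indicator (1 : Ω → ℝ≥0∞) ω ∂P := by
      rw [lintegral_finset_sum _ fun j _ => measurable_one.indicator (hAmeas j)]
      refine Finset.sum_congr rfl fun j _ => ?_
      exact (lintegral_indicator_one (hAmeas j)).symm
    rw [h1]
    calc ∫⁻ ω, ∑ j : Fin (n+1), (A j).indicator (1 : Ω → ℝ≥0∞) ω ∂P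
        ≤ ∫⁻ _, (k : ℝ≥0∞) ∂P := by
          apply lintegral_mono
          intro ω
          change ∑ j : Fin (n+1), (A j).indicator (1 : Ω → ℝ≥0∞) ω ≤ (k : ℝ≥0∞)
          have : ∑ j : Fin (n+1), (A j).indicator (1 : Ω → ℝ≥0∞) ω
              = ((Finset.univ.filter fun j : Fin (n+1) => ConfAux.rk j (E ω) ≤ k).card : ℝ≥0∞) := by
            simp only [hAdef, Set.indicator_apply, Set.mem_setOf_eq, Pi.one_apply]
            rw [Finset.sum_boole]
          rw [this]
          exact_mod_cast ConfAux.rk_count_le (E ω) k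
      _ = (k : ℝ≥0∞) := by simp
  -- combine
  have hmul : ((n:ℝ≥0∞) + 1) * P (A (Fin.last n)) ≤ (k : ℝ≥0∞) := by
    calc ((n:ℝ≥0∞) + 1) * P (A (Fin.last n))
        = ∑ _j : Fin (n+1), P (A (Fin.last n)) := by
          rw [Finset.sum_const, Finset.card_univ, Fintype.card_fin, nsmul_eq_mul]
          push_cast
          ring
      _ = ∑ j : Fin (n+1), P (A j) := by
          exact Finset.sum_congr rfl fun j _ => (heq j).symm
      _ ≤ (k : ℝ≥0∞) := hsum
  have hkle : (k : ℝ≥0∞) ≤ ((n:ℝ≥0∞) + 1) * ENNReal.ofReal α := by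
    have : (k : ℝ) ≤ α * ((n:ℝ) + 1) := Nat.floor_le (by positivity)
    calc (k : ℝ≥0∞) = ENNReal.ofReal (k : ℝ) := by simp
      _ ≤ ENNReal.ofReal (α * ((n:ℝ)+1)) := ENNReal.ofReal_le_ofReal this
      _ = ENNReal.ofReal α * ENNReal.ofReal ((n:ℝ)+1) := ENNReal.ofReal_mul hα0
      _ = ((n:ℝ≥0∞) + 1) * ENNReal.ofReal α := by
          rw [mul_comm]
          congr 1
          rw [ENNReal.ofReal_add (by positivity) zero_le_one]
          simp
  have : ((n:ℝ≥0∞) + 1) * P (A (Fin.last n)) ≤ ((n:ℝ≥0∞) + 1) * ENNReal.ofReal α :=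
    le_trans hmul hkle
  exact (ENNReal.mul_le_mul_iff_right (by simp) (by simp)).mp this
end

section
/- Let $(X_1,Y_1), \ldots, (X_n,Y_n), (X,Y)$ be i.i.d. random pairs in $\mathbb{R}^d \times \mathbb{R}$. Let $A : (\mathbb{R}^d \times \mathbb{R})^{n+1} \to \mathbb{R}^{n+1}$ be a measurable, permutation-equivariant residual map (for every permutation $\sigma$, $A(z \circ \sigma) = A(z) \circ \sigma$). For each $y \in \mathbb{R}$, let $(e_1(y), \ldots, e_{n+1}(y)) = A\big( (X_1,Y_1), \ldots, (X_n,Y_n), (X,y) \big)$ and define $p(y) = \frac{1}{n+1} \sum_{i=1}^{n+1} \mathbf{1}\{ |e_i(y)| \ge |e_{n+1}(y)| \}$, and set $C = \{ y \in \mathbb{R} : p(y) \ge \alpha \}$. Then for every $\alpha \in (0,1)$, $\mathbb{P}( Y \in C ) \ge 1 - \alpha$; the conformal prediction set $C$ has finite-sample, distribution-free coverage at level $1-\alpha$, with no assumption that any model (in particular the linear model) is correct. -/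
open MeasureTheory

private lemma perm_measurePreserving {β : Type*} [MeasurableSpace β] (μ : Measure β)
    [SigmaFinite μ] {m : ℕ} (σ : Equiv.Perm (Fin m)) :
    MeasurePreserving (fun ω : Fin m → β => ω ∘ σ)
      (Measure.pi fun _ => μ) (Measure.pi fun _ => μ) := by
  have h := measurePreserving_piCongrLeft (fun _ : Fin m => μ) σ.symm
  have : ⇑(MeasurableEquiv.piCongrLeft (fun _ => β) σ.symm) = fun ω : Fin m → β => ω ∘ σ := by
    funext ω
    ext i
    simp [MeasurableEquiv.coe_piCongrLeft, Equiv.piCongrLeft_apply]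
  rwa [this] at h

private lemma rank_count_bound {N : ℕ} (v : Fin N → ℝ) (m : ℕ) :
    (Finset.univ.filter fun j : Fin N =>
      (Finset.univ.filter fun i : Fin N => |v j| ≤ |v i|).card ≤ m).card ≤ m := by
  set T := Finset.univ.filter fun j : Fin N =>
      (Finset.univ.filter fun i : Fin N => |v j| ≤ |v i|).card ≤ m with hT
  rcases T.eq_empty_or_nonempty with h | h
  · simp [h]
  · obtain ⟨j0, hj0, hmin⟩ := T.exists_min_image (fun j => |v j|) h
    have hsub : T ⊆ Finset.univ.filter fun i : Fin N => |v j0| ≤ |v i| := by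
      intro j hj
      simp only [Finset.mem_filter, Finset.mem_univ, true_and]
      exact hmin j hj
    have hcard := Finset.card_le_card hsub
    have hj0' : (Finset.univ.filter fun i : Fin N => |v j0| ≤ |v i|).card ≤ m := by
      simpa [hT] using (Finset.mem_filter.mp hj0).2
    omega

theorem conformal_prediction_coverage
    {n d : ℕ} (α : ℝ) (hα0 : 0 < α) (hα1 : α < 1)
    (μ : Measure ((Fin d → ℝ) × ℝ)) [IsProbabilityMeasure μ]
    -- the residual map
    (A : (Fin (n + 1) → (Fin d → ℝ) × ℝ) → Fin (n + 1) → ℝ)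
    (hAmeas : Measurable A)
    -- permutation equivariance of the residual map
    (hAequiv : ∀ (σ : Equiv.Perm (Fin (n + 1))) (z : Fin (n + 1) → (Fin d → ℝ) × ℝ),
      A (z ∘ σ) = A z ∘ σ)
    -- residuals from the dataset augmented with the tentative guess `y`
    (e : (Fin (n + 1) → (Fin d → ℝ) × ℝ) → ℝ → Fin (n + 1) → ℝ)
    (he : ∀ ω y, e ω y =
      A (Function.update ω (Fin.last n) ((ω (Fin.last n)).1, y)))
    -- the conformal p-value `p(y)`
    (pval : (Fin (n + 1) → (Fin d → ℝ) × ℝ) → ℝ → ℝ)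
    (hpval : ∀ ω y, pval ω y =
      (1 / ((n : ℝ) + 1)) *
        (Finset.univ.filter fun i : Fin (n + 1) => |e ω y (Fin.last n)| ≤ |e ω y i|).card)
    -- the conformal prediction set `C = {y : p(y) ≥ α}`
    (Cset : (Fin (n + 1) → (Fin d → ℝ) × ℝ) → Set ℝ)
    (hCset : ∀ ω, Cset ω = {y : ℝ | α ≤ pval ω y}) :
    ENNReal.ofReal (1 - α) ≤
      (Measure.pi fun _ : Fin (n + 1) => μ) {ω | (ω (Fin.last n)).2 ∈ Cset ω} := by
  classical
  set P := Measure.pi fun _ : Fin (n + 1) => μ with hP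
  -- rank counts
  set f : (Fin (n + 1) → (Fin d → ℝ) × ℝ) → Fin (n + 1) → ℕ := fun ω j =>
    (Finset.univ.filter fun i : Fin (n + 1) => |A ω j| ≤ |A ω i|).card with hf
  -- threshold
  set x : ℝ := α * ((n : ℝ) + 1) with hx
  have hx0 : 0 < x := by positivity
  have hceil : 1 ≤ ⌈x⌉₊ := Nat.one_le_ceil_iff.mpr hx0
  set m : ℕ := ⌈x⌉₊ - 1 with hm
  have hmx : (m : ℝ) < x := by
    have h1 : (⌈x⌉₊ : ℝ) < x + 1 := Nat.ceil_lt_add_one hx0.le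
    have h2 : (m : ℝ) = (⌈x⌉₊ : ℝ) - 1 := by
      rw [hm]; push_cast [hceil]; ring
    linarith
  set E : Fin (n + 1) → Set (Fin (n + 1) → (Fin d → ℝ) × ℝ) :=
    fun j => {ω | f ω j ≤ m} with hE
  -- at Y, residuals are A ω
  have heY : ∀ ω : Fin (n + 1) → (Fin d → ℝ) × ℝ, e ω (ω (Fin.last n)).2 = A ω := by
    intro ω
    rw [he]
    congr 1
    rw [Prod.mk.eta, Function.update_eq_self]
  -- the coverage event and its complement
  have hset : {ω : Fin (n + 1) → (Fin d → ℝ) × ℝ | (ω (Fin.last n)).2 ∈ Cset ω} =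
      (E (Fin.last n))ᶜ := by
    ext ω
    simp only [Set.mem_setOf_eq, hCset, hpval, heY, Set.mem_compl_iff, hE, hf, not_le]
    have hpos : (0 : ℝ) < (n : ℝ) + 1 := by positivity
    rw [one_div_mul_eq_div, le_div_iff₀ hpos]
    constructor
    · intro h
      have : x ≤ ((Finset.univ.filter fun i : Fin (n + 1) =>
          |A ω (Fin.last n)| ≤ |A ω i|).card : ℝ) := by rw [hx]; linarith [h]
      by_contra hc
      push_neg at hc
      have := hmx.trans_le this
      exact absurd (Nat.cast_lt.mp this) (by omega)
    · intro h
      have h' : ⌈x⌉₊ ≤ (Finset.univ.filter fun i : Fin (n + 1) =>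
          |A ω (Fin.last n)| ≤ |A ω i|).card := by omega
      have := (Nat.ceil_le.mp h')
      rw [hx] at this
      linarith
  -- measurability of rank-count events
  have hfmeas : ∀ j, Measurable fun ω => f ω j := by
    intro j
    simp only [hf, Finset.card_filter]
    apply Finset.measurable_sum
    intro i _
    apply Measurable.ite _ measurable_const measurable_const
    exact measurableSet_le ((measurable_pi_apply j).comp hAmeas).abs
      ((measurable_pi_apply i).comp hAmeas).abs
  have hEmeas : ∀ j, MeasurableSet (E j) :=
    fun j => measurableSet_le (hfmeas j) measurable_const
  -- exchangeability: all events {f · j ≤ m} have the same probability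
  have hexch : ∀ j : Fin (n + 1),
      P (E j) = P (E (Fin.last n)) := by
    intro j
    set σ := Equiv.swap j (Fin.last n) with hσ
    have hmp := perm_measurePreserving μ σ
    have hpre : (fun ω : Fin (n + 1) → (Fin d → ℝ) × ℝ => ω ∘ σ) ⁻¹'
        E (Fin.last n) = E j := by
      ext ω
      simp only [Set.mem_preimage, hE, Set.mem_setOf_eq, hf]
      have hA : A (ω ∘ σ) = A ω ∘ σ := hAequiv σ ω
      have hσl : σ (Fin.last n) = j := Equiv.swap_apply_right j (Fin.last n)
      have hcard : (Finset.univ.filter fun i : Fin (n + 1) =>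
            |A (ω ∘ σ) (Fin.last n)| ≤ |A (ω ∘ σ) i|).card =
          (Finset.univ.filter fun i : Fin (n + 1) => |A ω j| ≤ |A ω i|).card := by
        simp only [hA, Function.comp_apply, hσl, Finset.card_filter]
        exact Equiv.sum_comp σ (fun i => if |A ω j| ≤ |A ω i| then 1 else 0)
      rw [hcard]
    calc P (E j)
        = P ((fun ω : Fin (n + 1) → (Fin d → ℝ) × ℝ => ω ∘ σ) ⁻¹'
            E (Fin.last n)) := by rw [hpre]
      _ = P (E (Fin.last n)) := hmp.measure_preimage (hEmeas _).nullMeasurableSet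
  -- sum of probabilities bounded by m
  have hsum : (((n : ℕ) + 1) : ENNReal) * P (E (Fin.last n)) ≤ (m : ENNReal) := by
    have h1 : (((n : ℕ) + 1) : ENNReal) * P (E (Fin.last n)) =
        ∑ j : Fin (n + 1), P (E j) := by
      rw [Finset.sum_congr rfl (fun j _ => hexch j), Finset.sum_const, Finset.card_univ,
        Fintype.card_fin, nsmul_eq_mul]
      push_cast
      ring
    rw [h1]
    have h2 : ∑ j : Fin (n + 1), P (E j) =
        ∫⁻ ω, ∑ j : Fin (n + 1), (E j).indicator 1 ω ∂P := by
      rw [lintegral_finset_sum _ (fun j _ =>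
        (measurable_one.indicator (hEmeas j)))]
      exact Finset.sum_congr rfl fun j _ => (lintegral_indicator_one (hEmeas j)).symm
    rw [h2]
    calc ∫⁻ ω, ∑ j : Fin (n + 1), (E j).indicator 1 ω ∂P
        ≤ ∫⁻ _, (m : ENNReal) ∂P := by
          apply lintegral_mono
          intro ω
          have hsum_eq : ∑ j : Fin (n + 1), (E j).indicator 1 ω =
              ((Finset.univ.filter fun j : Fin (n + 1) => f ω j ≤ m).card : ENNReal) := by
            rw [Finset.card_filter]
            push_cast
            refine Finset.sum_congr rfl fun j _ => ?_
            rw [Set.indicator_apply]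
            simp [hE, Set.mem_setOf_eq]
          dsimp only
          rw [hsum_eq]
          have := rank_count_bound (A ω) m
          exact_mod_cast Nat.cast_le.mpr (by simp only [hf]; exact this)
      _ = (m : ENNReal) := by simp
  -- conclude: P(E last) ≤ ofReal α
  have hElast : P (E (Fin.last n)) ≤ ENNReal.ofReal α := by
    have hmle : (m : ENNReal) ≤ ENNReal.ofReal x := by
      rw [← ENNReal.ofReal_natCast]
      exact ENNReal.ofReal_le_ofReal hmx.le
    have hxsplit : ENNReal.ofReal x = ENNReal.ofReal α * (((n : ℕ) + 1) : ENNReal) := by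
      rw [hx, ENNReal.ofReal_mul hα0.le]
      congr 1
      rw [ENNReal.ofReal_add (by positivity) zero_le_one, ENNReal.ofReal_natCast,
        ENNReal.ofReal_one]
    have hc0 : (((n : ℕ) + 1) : ENNReal) ≠ 0 := by simp
    have hcinf : (((n : ℕ) + 1) : ENNReal) ≠ ⊤ := by simp
    have := hsum.trans (hmle.trans_eq hxsplit)
    rw [mul_comm (ENNReal.ofReal α)] at this
    exact (ENNReal.mul_le_mul_iff_right hc0 hcinf).mp this
  -- finish
  rw [hset, prob_compl_eq_one_sub (hEmeas (Fin.last n))]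
  have h1 : ENNReal.ofReal (1 - α) = 1 - ENNReal.ofReal α := by
    rw [ENNReal.ofReal_sub _ hα0.le, ENNReal.ofReal_one]
  rw [h1]
  exact tsub_le_tsub_left hElast 1
end
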